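/- Let n ≥ 2, d ≥ 1, let u : [n] → ℝ^d and c ∈ ℝ^d satisfy ⟪c, u_i⟫ < ⟪c, u_j⟫ for all i < j, and set m := n − 1. For any two strongly generic ω, ω′ ∈ ℝ^d, one has A^ω = A^{ω′} if and only if π^ω ≡sylv π^{ω′}. -/

import Mathlib

open scoped RealInnerProductSpace

/-- The slope `ρ^ω(i,j)` of the edge from vertex `u i` to vertex `u j`,
with respect to the objective direction `c`. -/
noncomputable def rho {n d : ℕ} (u : Fin n → EuclideanSpace ℝ (Fin d))
    (c ω : EuclideanSpace ℝ (Fin d)) (i j : Fin n) : ℝ :=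
  ⟪ω, u j - u i⟫ / ⟪c, u j - u i⟫

/-- `τ^ω(i)`: the maximal slope from vertex `i` to a later vertex
(the supremum of the finite set of slopes `ρ^ω(i,j)` for `i < j`;
it is meaningful for non-maximal `i`, where this set is nonempty). -/
noncomputable def tau {n d : ℕ} (u : Fin n → EuclideanSpace ℝ (Fin d))
    (c ω : EuclideanSpace ℝ (Fin d)) (i : Fin n) : ℝ :=
  sSup {x : ℝ | ∃ j : Fin n, i < j ∧ x = rho u c ω i j}

/-- `ω` is generic: for each non-maximal vertex `i` there is a unique `j > i`
whose slope attains the maximal slope `τ^ω(i)`. -/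
def Generic {n d : ℕ} (u : Fin n → EuclideanSpace ℝ (Fin d))
    (c ω : EuclideanSpace ℝ (Fin d)) : Prop :=
  ∀ i : Fin n, (i : ℕ) + 1 < n →
    ∃! j : Fin n, i < j ∧ rho u c ω i j = tau u c ω i

/-- `A` is the max-slope arborescence `A^ω`: it fixes the maximal vertex, and
sends every other vertex `i` to an improving neighbour attaining `τ^ω(i)`. -/
def IsArbo {n d : ℕ} (u : Fin n → EuclideanSpace ℝ (Fin d))
    (c ω : EuclideanSpace ℝ (Fin d)) (A : Fin n → Fin n) : Prop :=
  (∀ i : Fin n, (i : ℕ) + 1 = n → A i = i) ∧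
  (∀ i : Fin n, (i : ℕ) + 1 < n →
    i < A i ∧ rho u c ω i (A i) = tau u c ω i)

/-- `ω` is strongly generic: it is generic and the slopes
`τ^ω(1), …, τ^ω(m)` at the `m` non-maximal vertices are pairwise distinct. -/
def StronglyGeneric {m d : ℕ} (u : Fin (m + 1) → EuclideanSpace ℝ (Fin d))
    (c ω : EuclideanSpace ℝ (Fin d)) : Prop :=
  Generic u c ω ∧ Function.Injective fun i : Fin m => tau u c ω i.castSucc

/-- One step of the sylvester rewriting rule on permutations of `[m]` (in
one-line notation): the letters at two consecutive positions `a, b = a+1`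
may be exchanged whenever some letter strictly between them in value appears
at an earlier position (`U j V i k W ≡ U j V k i W` for letters `i < j < k`). -/
def SylvRel (m : ℕ) (π π' : Equiv.Perm (Fin m)) : Prop :=
  ∃ a b : Fin m, (a : ℕ) + 1 = (b : ℕ) ∧ π' = π * Equiv.swap a b ∧
    ∃ e : Fin m, e < a ∧ min (π a) (π b) < π e ∧ π e < max (π a) (π b)

/-- The sylvester congruence: the equivalence relation on permutations of `[m]`
generated by the sylvester rewriting rule. -/
def Sylv (m : ℕ) : Equiv.Perm (Fin m) → Equiv.Perm (Fin m) → Prop :=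
  Relation.EqvGen (SylvRel m)

/-! Call `π⁻¹ v` the rank of a non-maximal vertex `v`: its position in the order of increasing
`τ^ω`. Since the slope `ρ(i,j)` is the mediant of `ρ(i,k)` and `ρ(k,j)` for `i < k < j`, the
max-slope arborescence sends `v` to the first later vertex of smaller rank (the last vertex
if there is none), so it is a function of `π^ω` alone. A sylvester move exchanges the ranks of
letters `v < w` only when a letter strictly between them has even smaller rank; then neither
`w` nor any vertex up to `w` can be the first later vertex of smaller rank than `v`, so the
arborescence survives the move. Conversely, if `π` and `π'` give the same arborescence and
disagree on two letters at adjacent positions of `π`, the arborescence exhibits a letter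
between them at an earlier position, so swapping them is a sylvester move that lowers the
number of pairs on which `π` and `π'` disagree. -/

open Equiv Finset

lemma div_lt_add_div_add_iff {a b c d : ℝ} (hb : 0 < b) (hd : 0 < d) :
    a / b < (a + c) / (b + d) ↔ (a + c) / (b + d) < c / d := by
  rw [div_lt_div_iff₀ hb (by positivity), div_lt_div_iff₀ (by positivity) hd]
  constructor <;> intro h <;> nlinarith

lemma Fin.swap_lt_swap_iff {m : ℕ} {a b r s : Fin m} (hab : (a : ℕ) + 1 = b)
    (hrs : s(r, s) ≠ s(a, b)) : swap a b r < swap a b s ↔ r < s := by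
  simp only [ne_eq, Sym2.eq_iff, Fin.ext_iff, not_or, not_and_or] at hrs
  simp only [swap_apply_def, Fin.lt_def]
  split_ifs <;> simp only [Fin.ext_iff] at * <;> omega

section Slopes

variable {n d : ℕ} {u : Fin n → EuclideanSpace ℝ (Fin d)} {c ω : EuclideanSpace ℝ (Fin d)}
  {A : Fin n → Fin n}

lemma rho_le_tau {i k : Fin n} (hk : i < k) : rho u c ω i k ≤ tau u c ω i :=
  le_csSup
    ((Set.finite_range (rho u c ω i)).subset (by rintro _ ⟨j, -, rfl⟩; exact ⟨j, rfl⟩)).bddAbove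
    ⟨k, hk, rfl⟩

lemma rho_lt_tau (hg : Generic u c ω) (hA : IsArbo u c ω A) {i k : Fin n}
    (hi : (i : ℕ) + 1 < n) (hk : i < k) (hkA : k ≠ A i) : rho u c ω i k < tau u c ω i :=
  (rho_le_tau hk).lt_of_ne fun h => hkA ((hg i hi).unique ⟨hk, h⟩ (hA.2 i hi))

lemma rho_lt_rho_iff (hc : ∀ i j : Fin n, i < j → ⟪c, u i⟫ < ⟪c, u j⟫) {i k j : Fin n}
    (hik : i < k) (hkj : k < j) :
    rho u c ω i k < rho u c ω i j ↔ rho u c ω i j < rho u c ω k j := by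
  have hsplit : u j - u i = (u k - u i) + (u j - u k) := by abel
  have hpos : ∀ {p q : Fin n}, p < q → 0 < ⟪c, u q - u p⟫ := fun hpq => by
    rw [inner_sub_right, sub_pos]; exact hc _ _ hpq
  unfold rho
  rw [hsplit, inner_add_right, inner_add_right]
  exact div_lt_add_div_add_iff (hpos hik) (hpos hkj)

variable (hc : ∀ i j : Fin n, i < j → ⟪c, u i⟫ < ⟪c, u j⟫) (hg : Generic u c ω)
  (hA : IsArbo u c ω A)
include hc hg hA

lemma tau_lt_tau_of_lt_of_lt_arbo {v w : Fin n} (hv : (v : ℕ) + 1 < n) (hvw : v < w)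
    (hwA : w < A v) : tau u c ω v < tau u c ω w := by
  have hvA := (hA.2 v hv).2
  calc tau u c ω v = rho u c ω v (A v) := hvA.symm
    _ < rho u c ω w (A v) :=
      (rho_lt_rho_iff hc hvw hwA).1 (hvA ▸ rho_lt_tau hg hA hv hvw hwA.ne)
    _ ≤ tau u c ω w := rho_le_tau hwA

lemma tau_arbo_lt_tau {v : Fin n} (hv : (v : ℕ) + 1 < n) (hAv : (A v : ℕ) + 1 < n) :
    tau u c ω (A v) < tau u c ω v := by
  obtain ⟨hvw, hvA⟩ := hA.2 v hv
  obtain ⟨hwj, hwA⟩ := hA.2 (A v) hAv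
  have hvj : rho u c ω v (A (A v)) < rho u c ω v (A v) :=
    hvA ▸ rho_lt_tau hg hA hv (hvw.trans hwj) hwj.ne'
  calc tau u c ω (A v) = rho u c ω (A v) (A (A v)) := hwA.symm
    _ ≤ rho u c ω v (A (A v)) :=
      not_lt.1 fun h => hvj.not_gt ((rho_lt_rho_iff hc hvw hwj).2 h)
    _ < rho u c ω v (A v) := hvj
    _ = tau u c ω v := hvA

end Slopes

/-- `π⁻¹ v` is the rank of the vertex `v`; the last vertex counts as having rank `-∞`, so it is
`A v` when no later vertex has smaller rank than `v`. -/
structure IsNextSmaller {m : ℕ} (π : Perm (Fin m)) (A : Fin (m + 1) → Fin (m + 1)) : Prop where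
  lt_apply : ∀ v : Fin m, v.castSucc < A v.castSucc
  rank_lt_of_lt_of_lt_apply :
    ∀ v w : Fin m, v < w → w.castSucc < A v.castSucc → π⁻¹ v < π⁻¹ w
  rank_apply_lt : ∀ v w : Fin m, A v.castSucc = w.castSucc → π⁻¹ w < π⁻¹ v

lemma isNextSmaller_of_isArbo {m d : ℕ} {u : Fin (m + 1) → EuclideanSpace ℝ (Fin d)}
    {c ω : EuclideanSpace ℝ (Fin d)} {A : Fin (m + 1) → Fin (m + 1)} {π : Perm (Fin m)}
    (hc : ∀ i j : Fin (m + 1), i < j → ⟪c, u i⟫ < ⟪c, u j⟫) (hg : Generic u c ω)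
    (hA : IsArbo u c ω A) (hπ : StrictMono fun q : Fin m => tau u c ω ((π q).castSucc)) :
    IsNextSmaller π A := by
  have rank_lt {v w : Fin m} (h : tau u c ω v.castSucc < tau u c ω w.castSucc) :
      π⁻¹ v < π⁻¹ w :=
    hπ.lt_iff_lt.1 (by simpa only [Perm.coe_inv, apply_symm_apply] using h)
  have hlt (v : Fin m) : (v.castSucc : ℕ) + 1 < m + 1 := by simp
  refine ⟨fun v => (hA.2 _ (hlt v)).1, fun v w hvw hwA => ?_, fun v w hw => ?_⟩
  · exact rank_lt (tau_lt_tau_of_lt_of_lt_arbo hc hg hA (hlt v)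
      (Fin.castSucc_lt_castSucc_iff.2 hvw) hwA)
  · exact rank_lt (hw ▸ tau_arbo_lt_tau hc hg hA (hlt v) (hw ▸ hlt w))

namespace IsNextSmaller

variable {m : ℕ} {π π' : Perm (Fin m)} {A A' : Fin (m + 1) → Fin (m + 1)}

lemma not_apply_lt_apply (h : IsNextSmaller π A) (h' : IsNextSmaller π A') (v : Fin m) :
    ¬ A v.castSucc < A' v.castSucc := by
  intro hlt
  obtain ⟨w, hw⟩ := Fin.eq_castSucc_of_ne_last (hlt.trans_le (Fin.le_last _)).ne
  rw [← hw] at hlt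
  have hvw : v < w := Fin.castSucc_lt_castSucc_iff.1 (hw ▸ h.lt_apply v)
  exact (h.rank_apply_lt v w hw.symm).not_gt (h'.rank_lt_of_lt_of_lt_apply v w hvw hlt)

lemma unique (h : IsNextSmaller π A) (h' : IsNextSmaller π A')
    (hl : A (Fin.last m) = Fin.last m) (hl' : A' (Fin.last m) = Fin.last m) : A = A' := by
  funext i
  induction i using Fin.lastCases with
  | last => rw [hl, hl']
  | cast v =>
    exact le_antisymm (not_lt.1 (h'.not_apply_lt_apply h v))
      (not_lt.1 (h.not_apply_lt_apply h' v))

end IsNextSmaller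

section Sylvester

variable {m : ℕ} {π π' : Perm (Fin m)} {A : Fin (m + 1) → Fin (m + 1)}

lemma SylvRel.symm (h : SylvRel m π π') : SylvRel m π' π := by
  obtain ⟨a, b, hab, rfl, e, he, hmin, hmax⟩ := h
  have hea : e ≠ a := he.ne
  have heb : e ≠ b := by rw [Ne, Fin.ext_iff]; rw [Fin.lt_def] at he; omega
  refine ⟨a, b, hab, by rw [mul_assoc, swap_mul_self, mul_one], e, he, ?_⟩
  simp only [Perm.mul_apply, swap_apply_left, swap_apply_right, swap_apply_of_ne_of_ne hea heb]
  rw [min_comm, max_comm]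
  exact ⟨hmin, hmax⟩

-- The letter `π e` would lie strictly between `v` and `A v` at a position before that of `v`.
lemma IsNextSmaller.sym2_rank_ne (hE : IsNextSmaller π A) {a b e : Fin m}
    (hab : (a : ℕ) + 1 = b) (he : e < a) (hmin : min (π a) (π b) < π e)
    (hmax : π e < max (π a) (π b)) {v w : Fin m} (hvw : v < w)
    (hwA : w.castSucc ≤ A v.castSucc) : s(π⁻¹ v, π⁻¹ w) ≠ s(a, b) := by
  intro h
  rw [Sym2.eq_iff, Perm.inv_eq_iff_eq, Perm.inv_eq_iff_eq, Perm.inv_eq_iff_eq,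
    Perm.inv_eq_iff_eq] at h
  have key (hve : v < π e) (hew : π e < w) : π⁻¹ v < e := by
    simpa only [Perm.coe_inv, symm_apply_apply] using hE.rank_lt_of_lt_of_lt_apply v (π e) hve
      ((Fin.castSucc_lt_castSucc_iff.2 hew).trans_le hwA)
  rcases h with ⟨rfl, rfl⟩ | ⟨rfl, rfl⟩
  · rw [min_eq_left hvw.le, max_eq_right hvw.le] at *
    exact lt_irrefl a
      (by simpa only [Perm.coe_inv, symm_apply_apply] using (key hmin hmax).trans he)
  · rw [min_eq_right hvw.le, max_eq_left hvw.le] at *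
    have := key hmin hmax
    simp only [Perm.coe_inv, symm_apply_apply, Fin.lt_def] at this he
    omega

lemma IsNextSmaller.of_sylvRel (hE : IsNextSmaller π A) (h : SylvRel m π π') :
    IsNextSmaller π' A := by
  obtain ⟨a, b, hab, rfl, e, he, hmin, hmax⟩ := h
  have hrank {v w : Fin m} (hne : s(π⁻¹ v, π⁻¹ w) ≠ s(a, b)) :
      (π * swap a b)⁻¹ v < (π * swap a b)⁻¹ w ↔ π⁻¹ v < π⁻¹ w := by
    rw [mul_inv_rev, swap_inv, Perm.mul_apply, Perm.mul_apply]
    exact Fin.swap_lt_swap_iff hab hne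
  refine ⟨hE.lt_apply, fun v w hvw hwA => ?_, fun v w hw => ?_⟩
  · exact (hrank (hE.sym2_rank_ne hab he hmin hmax hvw hwA.le)).2
      (hE.rank_lt_of_lt_of_lt_apply v w hvw hwA)
  · have hvw : v < w := Fin.castSucc_lt_castSucc_iff.1 (hw ▸ hE.lt_apply v)
    refine (hrank ?_).2 (hE.rank_apply_lt v w hw)
    rw [Sym2.eq_swap]
    exact hE.sym2_rank_ne hab he hmin hmax hvw hw.ge

lemma isNextSmaller_congr (h : Sylv m π π') : IsNextSmaller π A ↔ IsNextSmaller π' A :=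
  (Equivalence.eqvGen_iff (r := fun σ σ' => IsNextSmaller σ A ↔ IsNextSmaller σ' A)
    ⟨fun _ => Iff.rfl, Iff.symm, Iff.trans⟩).1
    (Relation.EqvGen.mono (fun _ _ hr => ⟨(·.of_sylvRel hr), (·.of_sylvRel hr.symm)⟩) _ _ h)

end Sylvester

section Connectivity

variable {m : ℕ} {π π' : Perm (Fin m)} {A : Fin (m + 1) → Fin (m + 1)}

def discordantPairs (π π' : Perm (Fin m)) : Finset (Fin m × Fin m) :=
  univ.filter fun p => π⁻¹ p.1 < π⁻¹ p.2 ∧ π'⁻¹ p.2 < π'⁻¹ p.1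

lemma card_discordantPairs_mul_swap_lt {a b : Fin m} (hab : (a : ℕ) + 1 = b)
    (hd : π'⁻¹ (π b) < π'⁻¹ (π a)) :
    #(discordantPairs (π * swap a b) π') < #(discordantPairs π π') := by
  have hlt : a < b := by rw [Fin.lt_def]; omega
  simp only [discordantPairs, mul_inv_rev, swap_inv, Perm.mul_apply]
  refine card_lt_card ⟨fun p hp => ?_, fun hsub => ?_⟩
  · simp only [mem_filter, mem_univ, true_and] at hp ⊢
    refine ⟨?_, hp.2⟩
    by_cases hne : s(π⁻¹ p.1, π⁻¹ p.2) = s(a, b)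
    · rw [Sym2.eq_iff, Perm.inv_eq_iff_eq, Perm.inv_eq_iff_eq, Perm.inv_eq_iff_eq,
        Perm.inv_eq_iff_eq] at hne
      rcases hne with ⟨h1, h2⟩ | ⟨h1, h2⟩
      · simpa [h1, h2] using hlt
      · exact absurd hp.2 (by simpa [h1, h2] using hd.le)
    · exact (Fin.swap_lt_swap_iff hab hne).1 hp.1
  · have := @hsub (π a, π b) (by simpa using ⟨hlt, hd⟩)
    simp only [mem_filter, mem_univ, true_and, Perm.coe_inv, symm_apply_apply,
      swap_apply_left, swap_apply_right] at this
    exact this.1.not_gt hlt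

lemma exists_adjacent_discordant (h : π ≠ π') :
    ∃ a b : Fin m, (a : ℕ) + 1 = b ∧ π'⁻¹ (π b) < π'⁻¹ (π a) := by
  by_contra! hmono
  cases m with
  | zero => exact h (Subsingleton.elim _ _)
  | succ k =>
    have hσ : StrictMono (π'⁻¹ * π) := Fin.strictMono_iff_lt_succ.2 fun i =>
      (hmono _ _ (by simp)).lt_of_ne
        ((π'⁻¹ * π).injective.ne (Fin.castSucc_lt_succ (i := i)).ne)
    have : hσ.orderIsoOfSurjective _ (π'⁻¹ * π).surjective = OrderIso.refl _ :=
      Subsingleton.elim _ _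
    exact h (inv_mul_eq_one.1 (Equiv.ext fun i => congr($this i))).symm

lemma IsNextSmaller.exists_between (hE : IsNextSmaller π A) (hE' : IsNextSmaller π' A)
    {x y : Fin m} (hxy : x < y) (hdis : π⁻¹ x < π⁻¹ y ↔ π'⁻¹ y < π'⁻¹ x) :
    ∃ t, x < t ∧ t < y ∧ π⁻¹ t < π⁻¹ x := by
  rcases lt_trichotomy (A x.castSucc) y.castSucc with hlt | heq | hgt
  · obtain ⟨t, ht⟩ := Fin.eq_castSucc_of_ne_last (hlt.trans_le (Fin.le_last _)).ne
    rw [← ht] at hlt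
    exact ⟨t, Fin.castSucc_lt_castSucc_iff.1 (ht ▸ hE.lt_apply x),
      Fin.castSucc_lt_castSucc_iff.1 hlt, hE.rank_apply_lt x t ht.symm⟩
  · exact absurd (hdis.2 (hE'.rank_apply_lt x y heq)) (hE.rank_apply_lt x y heq).not_gt
  · exact absurd (hdis.1 (hE.rank_lt_of_lt_of_lt_apply x y hxy hgt))
      (hE'.rank_lt_of_lt_of_lt_apply x y hxy hgt).not_gt

lemma IsNextSmaller.sylvRel_mul_swap (hE : IsNextSmaller π A) (hE' : IsNextSmaller π' A)
    {a b : Fin m} (hab : (a : ℕ) + 1 = b) (hd : π'⁻¹ (π b) < π'⁻¹ (π a)) :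
    SylvRel m π (π * swap a b) := by
  have hlt : a < b := by rw [Fin.lt_def]; omega
  have hv : π⁻¹ (π a) = a := by simp
  have hw : π⁻¹ (π b) = b := by simp
  obtain ⟨t, hxt, hty, ht⟩ : ∃ t, min (π a) (π b) < t ∧ t < max (π a) (π b) ∧
      π⁻¹ t < π⁻¹ (min (π a) (π b)) := by
    rcases lt_or_gt_of_ne (π.injective.ne hlt.ne) with h | h
    · rw [min_eq_left h.le, max_eq_right h.le]
      exact hE.exists_between hE' h (iff_of_true (by rwa [hv, hw]) hd)
    · rw [min_eq_right h.le, max_eq_left h.le]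
      exact hE.exists_between hE' h (iff_of_false (by rw [hv, hw]; exact hlt.not_gt) hd.not_gt)
  refine ⟨a, b, hab, rfl, π⁻¹ t, ?_, by simpa using hxt, by simpa using hty⟩
  have ht_ne {s : Fin m} (hs : s = a ∨ s = b) : π⁻¹ t ≠ s := fun h => by
    rw [Perm.inv_eq_iff_eq] at h
    subst h
    rcases hs with rfl | rfl <;>
      simp only [min_lt_iff, lt_max_iff, lt_self_iff_false, false_or, or_false] at hxt hty <;>
      exact hxt.asymm hty
  have hta := ht_ne (.inl rfl)
  have htb := ht_ne (.inr rfl)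
  rcases min_choice (π a) (π b) with h | h <;> rw [h] at ht <;> simp only [hv, hw] at ht
  · exact ht
  · rw [Fin.lt_def] at ht ⊢; rw [Ne, Fin.ext_iff] at hta htb; omega

end Connectivity

theorem sylv_of_isNextSmaller {m : ℕ} {π π' : Perm (Fin m)} {A : Fin (m + 1) → Fin (m + 1)}
    (hE : IsNextSmaller π A) (hE' : IsNextSmaller π' A) : Sylv m π π' := by
  by_cases h : π = π'
  · exact h ▸ Relation.EqvGen.refl π
  obtain ⟨a, b, hab, hd⟩ := exists_adjacent_discordant h
  have hrel := hE.sylvRel_mul_swap hE' hab hd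
  exact .trans _ _ _ (.rel _ _ hrel) (sylv_of_isNextSmaller (hE.of_sylvRel hrel) hE')
termination_by #(discordantPairs π π')
decreasing_by exact card_discordantPairs_mul_swap_lt hab hd

theorem arbo_eq_iff_sylv_general (m d : ℕ)
    (u : Fin (m + 1) → EuclideanSpace ℝ (Fin d)) (c : EuclideanSpace ℝ (Fin d))
    (hc : ∀ i j : Fin (m + 1), i < j → ⟪c, u i⟫ < ⟪c, u j⟫)
    (ω ω' : EuclideanSpace ℝ (Fin d))
    (hω : StronglyGeneric u c ω) (hω' : StronglyGeneric u c ω')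
    (A A' : Fin (m + 1) → Fin (m + 1))
    (hA : IsArbo u c ω A) (hA' : IsArbo u c ω' A')
    (π π' : Equiv.Perm (Fin m))
    (hπ : StrictMono fun q : Fin m => tau u c ω ((π q).castSucc))
    (hπ' : StrictMono fun q : Fin m => tau u c ω' ((π' q).castSucc)) :
    A = A' ↔ Sylv m π π' := by
  have hE := isNextSmaller_of_isArbo hc hω.1 hA hπ
  have hE' := isNextSmaller_of_isArbo hc hω'.1 hA' hπ'
  constructor
  · rintro rfl
    exact sylv_of_isNextSmaller hE hE'
  · intro h
    exact ((isNextSmaller_congr h).1 hE).unique hE' (hA.1 _ (by simp)) (hA'.1 _ (by simp))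

/-- for strongly generic `ω, ω'`, the arborescences agree if and
only if the sorting permutations of the slope vectors are sylvester congruent. -/
theorem arbo_eq_iff_sylv (m d : ℕ) (hm : 1 ≤ m) (hd : 1 ≤ d)
    (u : Fin (m + 1) → EuclideanSpace ℝ (Fin d)) (c : EuclideanSpace ℝ (Fin d))
    (hc : ∀ i j : Fin (m + 1), i < j → ⟪c, u i⟫ < ⟪c, u j⟫)
    (ω ω' : EuclideanSpace ℝ (Fin d))
    (hω : StronglyGeneric u c ω) (hω' : StronglyGeneric u c ω')
    (A A' : Fin (m + 1) → Fin (m + 1))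
    (hA : IsArbo u c ω A) (hA' : IsArbo u c ω' A')
    (π π' : Equiv.Perm (Fin m))
    (hπ : StrictMono fun q : Fin m => tau u c ω ((π q).castSucc))
    (hπ' : StrictMono fun q : Fin m => tau u c ω' ((π' q).castSucc)) :
    A = A' ↔ Sylv m π π' :=
  arbo_eq_iff_sylv_general m d u c hc ω ω' hω hω' A A' hA hA' π π' hπ hπ'
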